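/- arXiv:2110.07092 — 3 statements merged into one kernel-verified Lean document; each statement's English description precedes it below -/
import Mathlib

section
/- Let $G$ be a locally compact abelian group with Haar measure, and let $\Phi_1,\ldots,\Phi_n \in L^1(G)$. Suppose that for every choice of signs $\varepsilon \in \{-1,1\}^n$ we have $\|\sum_{j=1}^n \varepsilon_j \Phi_j\|_{L^1} \le M$. Then $\int_G \frac{1}{\sqrt{2}}\big(\sum_{j=1}^n |\Phi_j(x)|^2\big)^{1/2}\,dx \le M$. -/
/-!
Fix `x` and put `a j = Φ j x` and `f ε = ‖∑ j, ε j • a j‖` on the cube `{-1, 1}ⁿ`. The mean of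
`f ^ 2` is `∑ j, ‖a j‖ ^ 2`, and flipping the single sign `ε i` changes `f` by at most `2 ‖a i‖`.
Since `f` is even, its Walsh expansion has no odd levels, so apart from the constant term it lives
on levels `#A ≥ 2`; Parseval then sharpens the Poincaré inequality on the cube to
`Var f ≤ ½ ∑ j, ‖a j‖ ^ 2`, i.e. `(𝔼 f) ^ 2 ≥ ½ 𝔼 f ^ 2`. Integrating this pointwise bound in `x`
and averaging the hypothesis over all signs gives the theorem.
-/

open Finset MeasureTheory

namespace BooleanCube

variable {ι : Type*}

def sign (b : Bool) : ℝ := if b then 1 else -1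

lemma sign_eq_one_or_neg_one (b : Bool) : sign b = 1 ∨ sign b = -1 := by
  cases b <;> simp [sign]

@[simp] lemma sign_mul_self (b : Bool) : sign b * sign b = 1 := by
  cases b <;> norm_num [sign]

lemma one_add_sign_mul_sign (b b' : Bool) : 1 + sign b * sign b' = if b = b' then 2 else 0 := by
  cases b <;> cases b' <;> norm_num [sign]

def walsh (A : Finset ι) (ε : ι → Bool) : ℝ := ∏ i ∈ A, sign (ε i)

lemma sum_walsh_mul_walsh [Fintype ι] (ε ε' : ι → Bool) :
    ∑ A, walsh A ε * walsh A ε' = if ε = ε' then 2 ^ Fintype.card ι else 0 := by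
  calc ∑ A, walsh A ε * walsh A ε' = ∏ i, (1 + sign (ε i) * sign (ε' i)) := by
        rw [prod_one_add, powerset_univ]
        simp only [walsh, prod_mul_distrib]
    _ = _ := by
        simp only [one_add_sign_mul_sign]
        split_ifs with h
        · simp [h]
        · obtain ⟨i, hi⟩ := Function.ne_iff.mp h
          exact prod_eq_zero (mem_univ i) (if_neg hi)

variable [DecidableEq ι]

def flipOn (S : Finset ι) (ε : ι → Bool) : ι → Bool :=
  fun i => if i ∈ S then !ε i else ε i

lemma flipOn_involutive (S : Finset ι) : Function.Involutive (flipOn S) := by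
  intro ε
  funext i
  by_cases h : i ∈ S <;> simp [flipOn, h]

lemma sign_flipOn (S : Finset ι) (ε : ι → Bool) (i : ι) :
    sign (flipOn S ε i) = (if i ∈ S then -1 else 1) * sign (ε i) := by
  by_cases h : i ∈ S <;> simp only [flipOn, h, if_true, if_false] <;> cases ε i <;>
    norm_num [sign]

lemma walsh_flipOn (A S : Finset ι) (ε : ι → Bool) :
    walsh A (flipOn S ε) = (-1) ^ #(A ∩ S) * walsh A ε := by
  simp only [walsh, sign_flipOn, prod_mul_distrib, prod_ite_mem, prod_const]

variable [Fintype ι]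

def walshCoeff (f : (ι → Bool) → ℝ) (A : Finset ι) : ℝ := ∑ ε, f ε * walsh A ε

lemma walshCoeff_empty (f : (ι → Bool) → ℝ) : walshCoeff f ∅ = ∑ ε, f ε := by
  simp [walshCoeff, walsh]

lemma walshCoeff_sub (f g : (ι → Bool) → ℝ) (A : Finset ι) :
    walshCoeff (fun ε => f ε - g ε) A = walshCoeff f A - walshCoeff g A := by
  simp only [walshCoeff, sub_mul, sum_sub_distrib]

lemma sum_walshCoeff_sq (f : (ι → Bool) → ℝ) :
    ∑ A, walshCoeff f A ^ 2 = 2 ^ Fintype.card ι * ∑ ε, f ε ^ 2 := by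
  calc ∑ A, walshCoeff f A ^ 2
        = ∑ ε, ∑ ε', f ε * f ε' * ∑ A, walsh A ε * walsh A ε' := by
        simp_rw [walshCoeff, sq, sum_mul_sum, mul_sum]
        rw [sum_comm]
        refine sum_congr rfl fun ε _ => ?_
        rw [sum_comm]
        refine sum_congr rfl fun ε' _ => sum_congr rfl fun A _ => ?_
        ring
    _ = 2 ^ Fintype.card ι * ∑ ε, f ε ^ 2 := by
        simp [sum_walsh_mul_walsh, mul_sum, sq, mul_comm]

lemma sum_comp_flipOn {M : Type*} [AddCommMonoid M] (S : Finset ι) (g : (ι → Bool) → M) :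
    ∑ ε, g (flipOn S ε) = ∑ ε, g ε :=
  Equiv.sum_comp (flipOn_involutive S).toPerm g

lemma sum_walsh_eq_zero {A : Finset ι} (hA : A.Nonempty) : ∑ ε, walsh A ε = 0 := by
  obtain ⟨i, hi⟩ := hA
  have h : ∑ ε, walsh A ε = -∑ ε, walsh A ε := by
    conv_lhs => rw [← sum_comp_flipOn {i}]
    simp [walsh_flipOn, inter_singleton_of_mem hi]
  linarith

lemma walshCoeff_comp_flipOn (f : (ι → Bool) → ℝ) (S A : Finset ι) :
    walshCoeff (fun ε => f (flipOn S ε)) A = (-1) ^ #(A ∩ S) * walshCoeff f A := by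
  rw [walshCoeff, ← sum_comp_flipOn S, walshCoeff, mul_sum]
  refine sum_congr rfl fun ε _ => ?_
  rw [flipOn_involutive S ε, walsh_flipOn]
  ring

lemma walshCoeff_eq_zero_of_odd {f : (ι → Bool) → ℝ} (hf : ∀ ε, f (flipOn univ ε) = f ε)
    {A : Finset ι} (hA : Odd #A) : walshCoeff f A = 0 := by
  have h := walshCoeff_comp_flipOn f univ A
  simp only [hf, inter_univ, hA.neg_one_pow] at h
  linarith

lemma walshCoeff_sub_comp_flipOn_singleton (f : (ι → Bool) → ℝ) (i : ι) (A : Finset ι) :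
    walshCoeff (fun ε => f ε - f (flipOn {i} ε)) A =
      if i ∈ A then 2 * walshCoeff f A else 0 := by
  rw [walshCoeff_sub, walshCoeff_comp_flipOn]
  by_cases hi : i ∈ A
  · simp [hi, inter_singleton_of_mem hi]
    ring
  · simp [hi, inter_singleton_of_notMem hi]

lemma sum_card_mul_walshCoeff_sq (f : (ι → Bool) → ℝ) :
    4 * ∑ A, #A * walshCoeff f A ^ 2
      = 2 ^ Fintype.card ι * ∑ i, ∑ ε, (f ε - f (flipOn {i} ε)) ^ 2 := by
  calc 4 * ∑ A, #A * walshCoeff f A ^ 2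
        = ∑ i, ∑ A, (if i ∈ A then 2 * walshCoeff f A else 0) ^ 2 := by
        rw [sum_comm, mul_sum]
        refine sum_congr rfl fun A _ => ?_
        simp [apply_ite (· ^ 2), mul_pow, sum_ite_mem]
        ring
    _ = 2 ^ Fintype.card ι * ∑ i, ∑ ε, (f ε - f (flipOn {i} ε)) ^ 2 := by
        simp_rw [← walshCoeff_sub_comp_flipOn_singleton, sum_walshCoeff_sq, mul_sum]

lemma sq_walshCoeff_le_of_even {f : (ι → Bool) → ℝ} (hf : ∀ ε, f (flipOn univ ε) = f ε)
    {A : Finset ι} (hA : A ≠ ∅) : walshCoeff f A ^ 2 ≤ #A / 2 * walshCoeff f A ^ 2 := by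
  rcases Nat.even_or_odd #A with h | h
  · have hcard : (2 : ℝ) ≤ #A := by
      obtain ⟨k, hk⟩ := h
      have hne : #A ≠ 0 := card_ne_zero.mpr (nonempty_iff_ne_empty.mpr hA)
      exact_mod_cast (by omega : 2 ≤ #A)
    nlinarith [sq_nonneg (walshCoeff f A)]
  · simp [walshCoeff_eq_zero_of_odd hf h]

theorem sum_sq_le_sq_sum_add_of_even {f : (ι → Bool) → ℝ} (hf : ∀ ε, f (flipOn univ ε) = f ε) :
    2 ^ Fintype.card ι * ∑ ε, f ε ^ 2
      ≤ (∑ ε, f ε) ^ 2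
        + 2 ^ Fintype.card ι / 8 * ∑ i, ∑ ε, (f ε - f (flipOn {i} ε)) ^ 2 := by
  have hterm : ∀ A, walshCoeff f A ^ 2
      ≤ (if A = ∅ then walshCoeff f ∅ ^ 2 else 0)
        + 1 / 8 * (4 * (#A * walshCoeff f A ^ 2)) := by
    intro A
    by_cases h : A = ∅
    · simp [h]
    · simp only [h, if_false]
      linarith [sq_walshCoeff_le_of_even hf h]
  calc 2 ^ Fintype.card ι * ∑ ε, f ε ^ 2 = ∑ A, walshCoeff f A ^ 2 :=
        (sum_walshCoeff_sq f).symm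
    _ ≤ ∑ A, ((if A = ∅ then walshCoeff f ∅ ^ 2 else 0)
          + 1 / 8 * (4 * (#A * walshCoeff f A ^ 2))) := sum_le_sum fun A _ => hterm A
    _ = _ := by
        rw [sum_add_distrib, sum_ite_eq', ← mul_sum, ← mul_sum, sum_card_mul_walshCoeff_sq,
          walshCoeff_empty, if_pos (mem_univ _)]
        ring

variable {E : Type*} [NormedAddCommGroup E] [InnerProductSpace ℝ E]

lemma sum_sign_mul_sign (j k : ι) :
    ∑ ε : ι → Bool, sign (ε j) * sign (ε k) = if j = k then 2 ^ Fintype.card ι else 0 := by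
  split_ifs with h
  · simp [h]
  · rw [← sum_walsh_eq_zero (insert_nonempty j {k})]
    simp [walsh, prod_pair h]

lemma sum_norm_sum_sign_smul_sq (a : ι → E) :
    ∑ ε : ι → Bool, ‖∑ j, sign (ε j) • a j‖ ^ 2 = 2 ^ Fintype.card ι * ∑ j, ‖a j‖ ^ 2 := by
  calc ∑ ε : ι → Bool, ‖∑ j, sign (ε j) • a j‖ ^ 2
        = ∑ j, ∑ k, (∑ ε : ι → Bool, sign (ε j) * sign (ε k)) * inner ℝ (a j) (a k) := by
        simp_rw [← real_inner_self_eq_norm_sq, sum_inner, inner_sum, real_inner_smul_left,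
          real_inner_smul_right, sum_mul]
        rw [sum_comm]
        refine sum_congr rfl fun j _ => ?_
        rw [sum_comm]
        refine sum_congr rfl fun k _ => sum_congr rfl fun ε _ => ?_
        ring
    _ = 2 ^ Fintype.card ι * ∑ j, ‖a j‖ ^ 2 := by
        simp [sum_sign_mul_sign, mul_sum]

lemma sq_norm_sum_sign_smul_sub_flipOn_le (a : ι → E) (i : ι) (ε : ι → Bool) :
    (‖∑ j, sign (ε j) • a j‖ - ‖∑ j, sign (flipOn {i} ε j) • a j‖) ^ 2 ≤ 4 * ‖a i‖ ^ 2 := by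
  have hdiff : ∑ j, sign (ε j) • a j - ∑ j, sign (flipOn {i} ε j) • a j
      = (2 * sign (ε i)) • a i := by
    rw [← sum_sub_distrib, sum_eq_single i]
    · rw [sign_flipOn, if_pos (mem_singleton_self i), ← sub_smul]
      ring_nf
    · intro j _ hj
      simp [sign_flipOn, hj]
    · simp
  have hnorm : ‖(2 * sign (ε i)) • a i‖ = 2 * ‖a i‖ := by
    rcases sign_eq_one_or_neg_one (ε i) with h | h <;> simp [h, norm_smul]
  calc _ ≤ ‖(2 * sign (ε i)) • a i‖ ^ 2 := by
        rw [← hdiff, ← sq_abs]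
        exact pow_le_pow_left₀ (abs_nonneg _) (abs_norm_sub_norm_le _ _) 2
    _ = 4 * ‖a i‖ ^ 2 := by rw [hnorm]; ring

theorem khinchin_inequality (a : ι → E) :
    1 / √2 * √(∑ j, ‖a j‖ ^ 2)
      ≤ (2 ^ Fintype.card ι)⁻¹ * ∑ ε : ι → Bool, ‖∑ j, sign (ε j) • a j‖ := by
  set N := Fintype.card ι
  set t := ∑ j, ‖a j‖ ^ 2
  set T := ∑ ε : ι → Bool, ‖∑ j, sign (ε j) • a j‖
  have heven (ε : ι → Bool) :
      ‖∑ j, sign (flipOn univ ε j) • a j‖ = ‖∑ j, sign (ε j) • a j‖ := by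
    simp [sign_flipOn, sum_neg_distrib]
  have hpoincare :=
    sum_sq_le_sq_sum_add_of_even (f := fun ε => ‖∑ j, sign (ε j) • a j‖) heven
  have hflip : ∑ i, ∑ ε : ι → Bool,
      (‖∑ j, sign (ε j) • a j‖ - ‖∑ j, sign (flipOn {i} ε j) • a j‖) ^ 2
        ≤ 2 ^ N * (4 * t) := by
    calc _ ≤ ∑ i, ∑ _ε : ι → Bool, 4 * ‖a i‖ ^ 2 :=
          sum_le_sum fun i _ => sum_le_sum fun ε _ =>
            sq_norm_sum_sign_smul_sub_flipOn_le a i ε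
      _ = 2 ^ N * (4 * t) := by simp [N, t, mul_sum]
  rw [sum_norm_sum_sign_smul_sq] at hpoincare
  have hT : t / 2 ≤ ((2 ^ N)⁻¹ * T) ^ 2 := by
    rw [mul_pow, inv_pow, ← div_eq_inv_mul, le_div_iff₀ (by positivity)]
    have hN : (0 : ℝ) < 2 ^ N := by positivity
    nlinarith
  calc 1 / √2 * √t = √(t / 2) := by rw [Real.sqrt_div (by positivity)]; ring
    _ ≤ (2 ^ N)⁻¹ * T := (Real.sqrt_le_left (by positivity)).mpr hT

end BooleanCube

open BooleanCube in
theorem stmt0_general {G : Type*} [MeasurableSpace G]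
    (μ : Measure G)
    (n : ℕ) (Φ : Fin n → G → ℂ) (hΦ : ∀ j, Integrable (Φ j) μ) (M : ℝ)
    (hM : ∀ ε : Fin n → ℝ, (∀ j, ε j = 1 ∨ ε j = -1) →
      ∫ x, ‖∑ j, (ε j : ℂ) * Φ j x‖ ∂μ ≤ M) :
    ∫ x, (1 / Real.sqrt 2) * Real.sqrt (∑ j, ‖Φ j x‖ ^ 2) ∂μ ≤ M := by
  have hint : ∀ ε : Fin n → Bool,
      Integrable (fun x => ‖∑ j, sign (ε j) • Φ j x‖) μ :=
    fun ε => (integrable_finsetSum _ fun j _ => (hΦ j).smul (sign (ε j))).norm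
  have hle : ∀ ε : Fin n → Bool, ∫ x, ‖∑ j, sign (ε j) • Φ j x‖ ∂μ ≤ M := fun ε => by
    simpa [Complex.real_smul] using
      hM (fun j => sign (ε j)) fun j => sign_eq_one_or_neg_one _
  calc ∫ x, 1 / √2 * √(∑ j, ‖Φ j x‖ ^ 2) ∂μ
      ≤ ∫ x, (2 ^ n)⁻¹ * ∑ ε : Fin n → Bool, ‖∑ j, sign (ε j) • Φ j x‖ ∂μ :=
        integral_mono_of_nonneg (ae_of_all _ fun x => by positivity)
          ((integrable_finsetSum _ fun ε _ => hint ε).const_mul _)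
          (ae_of_all _ fun x => by simpa using khinchin_inequality fun j => Φ j x)
    _ = (2 ^ n)⁻¹ * ∑ ε : Fin n → Bool, ∫ x, ‖∑ j, sign (ε j) • Φ j x‖ ∂μ := by
        rw [integral_const_mul, integral_finsetSum _ fun ε _ => hint ε]
    _ ≤ (2 ^ n)⁻¹ * ∑ _ε : Fin n → Bool, M := by gcongr with ε; exact hle ε
    _ = M := by simp

theorem stmt0 {G : Type*} [AddCommGroup G] [TopologicalSpace G] [IsTopologicalAddGroup G]
    [LocallyCompactSpace G] [MeasurableSpace G] [BorelSpace G]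
    (μ : Measure G) [μ.IsAddHaarMeasure]
    (n : ℕ) (Φ : Fin n → G → ℂ) (hΦ : ∀ j, Integrable (Φ j) μ) (M : ℝ)
    (hM : ∀ ε : Fin n → ℝ, (∀ j, ε j = 1 ∨ ε j = -1) →
      ∫ x, ‖∑ j, (ε j : ℂ) * Φ j x‖ ∂μ ≤ M) :
    ∫ x, (1 / Real.sqrt 2) * Real.sqrt (∑ j, ‖Φ j x‖ ^ 2) ∂μ ≤ M :=
  stmt0_general μ n Φ hΦ M hM
end

section
/- Let $n \ge 1$ and let $t_1, \ldots, t_n$ be distinct elements of a finite abelian group $\Gamma$ with dual group $G$. Define $\|F\|_{A(\Gamma)} = \sum_{g \in G} |\check{F}(g)|$, where $\check{F}$ is the inverse Fourier transform of $F$ normalized so that $F(\gamma) = \sum_{g} \check F(g) \overline{(g,\gamma)}$. Then there exists a linear extension operator $\mathcal{E}$ from functions on $K = \{t_1,\ldots,t_n\}$ to functions on $\Gamma$ such that $(\mathcal{E}f)|_K = f$ and $\|\mathcal{E}f\|_{A(\Gamma)} \le \sqrt{n}\, \max_j |f(t_j)|$ for all $f$. -/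
open scoped ComplexConjugate

lemma stmt14_orth {Γ : Type*} [AddCommGroup Γ] [Fintype Γ] [DecidableEq Γ] (a b : Γ) :
    ∑ ψ : AddChar Γ ℂ, conj (ψ a) * ψ b = if a = b then (Fintype.card Γ : ℂ) else 0 := by
  have h : ∀ ψ : AddChar Γ ℂ, conj (ψ a) * ψ b = ψ (b - a) := by
    intro ψ
    rw [← AddChar.inv_apply_eq_conj, ← AddChar.map_neg_eq_inv, ← AddChar.map_add_eq_mul]
    congr 1; abel
  simp_rw [h, AddChar.sum_apply_eq_ite]
  congr 1
  simp [sub_eq_zero, eq_comm]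

theorem stmt14 {Γ : Type*} [AddCommGroup Γ] [Fintype Γ] [Fintype (AddChar Γ ℂ)]
    (n : ℕ) (hn : 1 ≤ n) (t : Fin n → Γ) (ht : Function.Injective t) :
    ∃ E : (Fin n → ℂ) →ₗ[ℂ] (Γ → ℂ),
      (∀ f j, E f (t j) = f j) ∧
      ∀ f : Fin n → ℂ, (∀ j, ‖f j‖ ≤ 1) →
        ∃ c : AddChar Γ ℂ → ℂ,
          (∀ γ : Γ, E f γ = ∑ ψ : AddChar Γ ℂ, c ψ * ψ γ) ∧
          ∑ ψ : AddChar Γ ℂ, ‖c ψ‖ ≤ Real.sqrt n := by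
  classical
  rename_i instF
  obtain rfl : instF = AddChar.instFintype Γ ℂ := Subsingleton.elim _ _
  set N : ℕ := Fintype.card Γ with hN
  have hN0 : 0 < N := Fintype.card_pos
  have hNC : (N : ℂ) ≠ 0 := Nat.cast_ne_zero.2 hN0.ne'
  have hcard : Fintype.card (AddChar Γ ℂ) = N := AddChar.card_eq
  refine ⟨{ toFun := fun f γ => ∑ j, f j * (if γ = t j then 1 else 0)
            map_add' := by
              intro f g; funext γ
              simp only [Pi.add_apply, add_mul]
              exact Finset.sum_add_distrib
            map_smul' := by
              intro a f; funext γ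
              simp [Finset.mul_sum, mul_assoc] }, ?_, ?_⟩
  · intro f j
    simp only [LinearMap.coe_mk, AddHom.coe_mk]
    rw [Finset.sum_eq_single j] <;>
      simp (config := { contextual := true }) [ht.eq_iff, eq_comm]
  · intro f hf
    set g : AddChar Γ ℂ → ℂ := fun ψ => ∑ j, f j * conj (ψ (t j)) with hg
    refine ⟨fun ψ => g ψ / N, ?_, ?_⟩
    · -- representation
      intro γ
      simp only [LinearMap.coe_mk, AddHom.coe_mk, hg]
      have step1 : ∑ ψ : AddChar Γ ℂ, (∑ j, f j * conj (ψ (t j))) / (N : ℂ) * ψ γ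
          = ∑ j, f j * (∑ ψ : AddChar Γ ℂ, conj (ψ (t j)) * ψ γ) / N := by
        simp_rw [Finset.sum_div, Finset.sum_mul]
        rw [Finset.sum_comm]
        refine Finset.sum_congr rfl fun j _ => ?_
        rw [Finset.mul_sum, Finset.sum_div]
        exact Finset.sum_congr rfl fun ψ _ => by ring
      rw [step1]
      refine (Finset.sum_congr rfl fun j _ => ?_).symm
      rw [stmt14_orth]
      by_cases h : γ = t j
      · simp only [if_pos h, if_pos h.symm]
        field_simp
        rfl
      · rw [if_neg h, if_neg (fun hh : t j = γ => h hh.symm)]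
        simp
    · -- norm bound
      -- complex Parseval-type identity
      have key : ∑ ψ : AddChar Γ ℂ, g ψ * conj (g ψ) = (N : ℂ) * ∑ j, f j * conj (f j) := by
        have expand : ∀ ψ : AddChar Γ ℂ, g ψ * conj (g ψ)
            = ∑ j, ∑ k, f j * conj (f k) * (conj (ψ (t j)) * ψ (t k)) := by
          intro ψ
          rw [hg]
          simp only [map_sum, map_mul, RingHomCompTriple.comp_apply, RingHom.id_apply,
            Complex.conj_conj]
          rw [Finset.sum_mul_sum]
          exact Finset.sum_congr rfl fun j _ => Finset.sum_congr rfl fun k _ => by ring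
        calc ∑ ψ : AddChar Γ ℂ, g ψ * conj (g ψ)
            = ∑ j, ∑ k, f j * conj (f k) * ∑ ψ : AddChar Γ ℂ, conj (ψ (t j)) * ψ (t k) := by
              simp_rw [expand]
              rw [Finset.sum_comm]
              refine Finset.sum_congr rfl fun j _ => ?_
              rw [Finset.sum_comm]
              exact Finset.sum_congr rfl fun k _ => by rw [Finset.mul_sum]
          _ = ∑ j, f j * conj (f j) * N := by
              refine Finset.sum_congr rfl fun j _ => ?_
              rw [Finset.sum_eq_single j]
              · rw [stmt14_orth, if_pos rfl]
              · intro k _ hk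
                rw [stmt14_orth, if_neg (fun h => hk (ht h.symm)), mul_zero]
              · simp
          _ = (N : ℂ) * ∑ j, f j * conj (f j) := by rw [Finset.mul_sum]; exact Finset.sum_congr rfl fun j _ => by ring
      -- real version
      have keyR : ∑ ψ : AddChar Γ ℂ, ‖g ψ‖ ^ 2 = (N : ℝ) * ∑ j, ‖f j‖ ^ 2 := by
        have := key
        simp_rw [Complex.mul_conj'] at this
        exact_mod_cast this
      have hsum2 : ∑ j, ‖f j‖ ^ 2 ≤ (n : ℝ) := by
        calc ∑ j : Fin n, ‖f j‖ ^ 2 ≤ ∑ j : Fin n, 1 := by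
              refine Finset.sum_le_sum fun j _ => ?_
              have := hf j
              nlinarith [norm_nonneg (f j)]
          _ = n := by simp
      -- Cauchy-Schwarz
      have CS : (∑ ψ : AddChar Γ ℂ, ‖g ψ / (N : ℂ)‖) ^ 2
          ≤ (N : ℝ) * ∑ ψ : AddChar Γ ℂ, ‖g ψ / (N : ℂ)‖ ^ 2 := by
        have := Finset.sum_mul_sq_le_sq_mul_sq Finset.univ (fun _ : AddChar Γ ℂ => (1 : ℝ))
          (fun ψ => ‖g ψ / (N : ℂ)‖)
        simpa [hcard] using this
      have hnorm : ∀ ψ : AddChar Γ ℂ, ‖g ψ / (N : ℂ)‖ ^ 2 = ‖g ψ‖ ^ 2 / (N : ℝ) ^ 2 := by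
        intro ψ
        rw [norm_div, div_pow]
        norm_num
      have h2 : ∑ ψ : AddChar Γ ℂ, ‖g ψ / (N : ℂ)‖ ^ 2 ≤ (n : ℝ) / N := by
        simp_rw [hnorm]
        rw [← Finset.sum_div, keyR]
        rw [div_le_div_iff₀ (by positivity) (by positivity)]
        calc (N : ℝ) * (∑ j, ‖f j‖ ^ 2) * N ≤ (N : ℝ) * n * N := by
              nlinarith [mul_le_mul_of_nonneg_left hsum2 (show (0:ℝ) ≤ (N:ℝ)*N by positivity)]
          _ = (n : ℝ) * N ^ 2 := by ring
      have final : (∑ ψ : AddChar Γ ℂ, ‖g ψ / (N : ℂ)‖) ^ 2 ≤ (n : ℝ) := by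
        calc (∑ ψ : AddChar Γ ℂ, ‖g ψ / (N : ℂ)‖) ^ 2
            ≤ (N : ℝ) * ((n : ℝ) / N) := le_trans CS (by
              exact mul_le_mul_of_nonneg_left h2 (by positivity))
          _ = n := by field_simp
      have hnn : 0 ≤ ∑ ψ : AddChar Γ ℂ, ‖g ψ / (N : ℂ)‖ :=
        Finset.sum_nonneg fun ψ _ => norm_nonneg _
      calc ∑ ψ : AddChar Γ ℂ, ‖g ψ / (N : ℂ)‖
          = Real.sqrt ((∑ ψ : AddChar Γ ℂ, ‖g ψ / (N : ℂ)‖) ^ 2) := (Real.sqrt_sq hnn).symm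
        _ ≤ Real.sqrt n := Real.sqrt_le_sqrt final
end

section
/- Let $n \ge 1$, let $G$ be a finite abelian group with $|G| \ge n$, and let $\gamma_1,\ldots,\gamma_n$ be distinct characters of $G$. For each $\varepsilon \in \{-1,1\}^n$ set $P_\varepsilon(x) = \sum_{j=1}^n \varepsilon_j \gamma_j(x)$. Then $$2^{-n}\sum_{\varepsilon \in \{-1,1\}^n} \frac{1}{|G|}\sum_{x \in G} |P_\varepsilon(x)| \ge \sqrt{n/2}.$$ -/
/-!
Write `P(ε) = ∑ⱼ εⱼ aⱼ` and `f(ε) = ‖P(ε)‖` on the cube `{±1}ᴺ`. Flipping one sign at a time,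
`∑ᵢ P(flipᵢ ε) = (N - 2) P(ε)`, so by the triangle inequality `∑ᵢ f(flipᵢ ε) ≥ (N - 2) f(ε)`.
Summed against `f`, this bounds the edge energy `∑ᵢ ‖f - f ∘ flipᵢ‖₂²` by `4 ‖f‖₂²`. In
Walsh–Fourier terms the energy is `4 ∑_S |S| f̂(S)²`, and since `f` is even its spectrum lives
on even levels, so the energy is at least `8 (‖f‖₂² - f̂(∅)²)`. Comparing the two gives
`‖f‖₂² ≤ 2 ‖f‖₁²` (normalized counting measure), while `‖f‖₂² = ∑ⱼ ‖aⱼ‖²` by orthogonality of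
the signs. For characters `‖γⱼ(x)‖ = 1`, so the bound `√(n/2)` holds for every `x`, hence
also on average over `G`.
-/

open Finset

def boolSign (b : Bool) : ℝ := if b then 1 else -1

lemma boolSign_not (b : Bool) : boolSign (!b) = -boolSign b := by cases b <;> simp [boolSign]

lemma boolSign_mul_self (b : Bool) : boolSign b * boolSign b = 1 := by
  cases b <;> simp [boolSign]

namespace BoolCube

variable {ι : Type*}

def walsh (S : Finset ι) (ε : ι → Bool) : ℝ := ∏ i ∈ S, boolSign (ε i)

lemma sum_walsh_mul_walsh [Fintype ι] (δ ε : ι → Bool) :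
    ∑ S : Finset ι, walsh S δ * walsh S ε = if δ = ε then (2 ^ Fintype.card ι : ℝ) else 0 := by
  have hprod : ∑ S : Finset ι, walsh S δ * walsh S ε
      = ∏ i, (1 + boolSign (δ i) * boolSign (ε i)) := by
    rw [prod_one_add, powerset_univ]
    simp only [walsh, prod_mul_distrib]
  rw [hprod]
  split_ifs with h
  · subst h; simp [boolSign_mul_self, one_add_one_eq_two]
  · obtain ⟨i, hi⟩ := Function.ne_iff.mp h
    refine prod_eq_zero (mem_univ i) ?_
    cases hδ : δ i <;> cases hε : ε i <;> simp_all [boolSign]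

variable [DecidableEq ι]

def flipAt (i : ι) (ε : ι → Bool) : ι → Bool := Function.update ε i (!ε i)

lemma boolSign_flipAt (i : ι) (ε : ι → Bool) (j : ι) :
    boolSign (flipAt i ε j) = (if j = i then -1 else 1) * boolSign (ε j) := by
  by_cases h : j = i
  · subst h; simp [flipAt, boolSign_not]
  · simp [flipAt, h]

lemma flipAt_involutive (i : ι) : Function.Involutive (flipAt i) := by
  intro ε
  funext j
  by_cases h : j = i
  · subst h; simp [flipAt]
  · simp [flipAt, h]

lemma walsh_flipAt (S : Finset ι) (i : ι) (ε : ι → Bool) :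
    walsh S (flipAt i ε) = (if i ∈ S then -1 else 1) * walsh S ε := by
  simp only [walsh, boolSign_flipAt, prod_mul_distrib, prod_ite_eq']

variable [Fintype ι]

lemma sum_comp_flipAt {M : Type*} [AddCommMonoid M] (i : ι) (F : (ι → Bool) → M) :
    ∑ ε, F (flipAt i ε) = ∑ ε, F ε :=
  (flipAt_involutive i).bijective.sum_comp F

lemma sum_boolSign_mul_boolSign (j k : ι) :
    ∑ ε : ι → Bool, boolSign (ε j) * boolSign (ε k)
      = if j = k then (2 ^ Fintype.card ι : ℝ) else 0 := by
  split_ifs with h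
  · subst h; simp [boolSign_mul_self]
  · -- flipping the `j`-th sign is a bijection of the cube that negates every summand
    have hneg := sum_comp_flipAt j fun ε => boolSign (ε j) * boolSign (ε k)
    simp only [boolSign_flipAt, if_true, if_neg (Ne.symm h), one_mul, neg_mul,
      sum_neg_distrib] at hneg
    linarith

lemma sum_norm_sq_sum_boolSign_smul {E : Type*} [NormedAddCommGroup E] [InnerProductSpace ℝ E]
    (a : ι → E) :
    ∑ ε : ι → Bool, ‖∑ j, boolSign (ε j) • a j‖ ^ 2
      = 2 ^ Fintype.card ι * ∑ j, ‖a j‖ ^ 2 := by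
  have hexpand : ∀ ε : ι → Bool, ‖∑ j, boolSign (ε j) • a j‖ ^ 2
      = ∑ j, ∑ k, boolSign (ε j) * boolSign (ε k) * inner ℝ (a j) (a k) := by
    intro ε
    rw [← real_inner_self_eq_norm_sq, sum_inner]
    simp_rw [inner_sum, real_inner_smul_left, real_inner_smul_right]
    exact sum_congr rfl fun j _ => sum_congr rfl fun k _ => by ring
  have hdiag : ∀ j, ∑ k, ∑ ε : ι → Bool, boolSign (ε j) * boolSign (ε k) * inner ℝ (a j) (a k)
      = 2 ^ Fintype.card ι * ‖a j‖ ^ 2 := by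
    intro j
    simp_rw [← sum_mul, sum_boolSign_mul_boolSign, ite_mul, zero_mul, sum_ite_eq, mem_univ,
      if_true, real_inner_self_eq_norm_sq]
  simp_rw [hexpand]
  rw [sum_comm, mul_sum]
  exact sum_congr rfl fun j _ => by rw [sum_comm, hdiag]

def walshCoeff (g : (ι → Bool) → ℝ) (S : Finset ι) : ℝ := ∑ ε, g ε * walsh S ε

lemma sum_sq_walshCoeff (g : (ι → Bool) → ℝ) :
    ∑ S : Finset ι, walshCoeff g S ^ 2 = 2 ^ Fintype.card ι * ∑ ε, g ε ^ 2 := by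
  have hexpand : ∀ S : Finset ι, walshCoeff g S ^ 2
      = ∑ δ, ∑ ε, g δ * g ε * (walsh S δ * walsh S ε) := by
    intro S
    rw [sq, walshCoeff, sum_mul_sum]
    exact sum_congr rfl fun δ _ => sum_congr rfl fun ε _ => by ring
  simp_rw [hexpand]
  rw [sum_comm, mul_sum]
  refine sum_congr rfl fun δ _ => ?_
  rw [sum_comm]
  simp_rw [← mul_sum, sum_walsh_mul_walsh, mul_ite, mul_zero, sum_ite_eq, mem_univ, if_true]
  ring

lemma walshCoeff_comp_flipAt (g : (ι → Bool) → ℝ) (S : Finset ι) (i : ι) :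
    walshCoeff (fun ε => g (flipAt i ε)) S = (if i ∈ S then -1 else 1) * walshCoeff g S := by
  rw [walshCoeff, ← sum_comp_flipAt i, walshCoeff, mul_sum]
  simp only [flipAt_involutive i _, walsh_flipAt]
  exact sum_congr rfl fun ε _ => by ring

lemma walshCoeff_eq_zero_of_odd {g : (ι → Bool) → ℝ} (hg : ∀ ε, g (fun i => !ε i) = g ε)
    {S : Finset ι} (hS : Odd S.card) : walshCoeff g S = 0 := by
  have hwalsh : ∀ ε, walsh S (fun i => !ε i) = -walsh S ε := fun ε => by
    simp only [walsh, boolSign_not, prod_neg, hS.neg_one_pow, neg_one_mul]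
  have hneg : walshCoeff g S = -walshCoeff g S := by
    conv_lhs => rw [walshCoeff, ← (Function.Involutive.bijective
      (f := fun (ε : ι → Bool) i => !ε i) fun ε => by simp).sum_comp]
    simp only [hg, hwalsh, walshCoeff, mul_neg, sum_neg_distrib]
  linarith

lemma walshCoeff_empty (g : (ι → Bool) → ℝ) : walshCoeff g ∅ = ∑ ε, g ε := by
  simp [walshCoeff, walsh]

lemma sum_sum_sq_sub_comp_flipAt (g : (ι → Bool) → ℝ) :
    2 ^ Fintype.card ι * ∑ i, ∑ ε, (g ε - g (flipAt i ε)) ^ 2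
      = 4 * ∑ S : Finset ι, (S.card : ℝ) * walshCoeff g S ^ 2 := by
  have hcoeff : ∀ i S, walshCoeff (fun ε => g ε - g (flipAt i ε)) S
      = if i ∈ S then 2 * walshCoeff g S else 0 := by
    intro i S
    have := walshCoeff_comp_flipAt g S i
    simp only [walshCoeff, sub_mul, sum_sub_distrib] at this ⊢
    rw [this]
    split_ifs <;> ring
  rw [mul_sum]
  refine (sum_congr rfl fun i _ => (sum_sq_walshCoeff _).symm).trans ?_
  simp_rw [hcoeff]
  rw [sum_comm, mul_sum]
  refine sum_congr rfl fun S _ => ?_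
  simp only [ite_pow, ne_eq, OfNat.ofNat_ne_zero, not_false_eq_true, zero_pow, sum_ite_mem,
    univ_inter, sum_const, nsmul_eq_mul]
  ring

lemma two_mul_sub_le_sum_card_mul_sq_walshCoeff {g : (ι → Bool) → ℝ}
    (hg : ∀ ε, g (fun i => !ε i) = g ε) :
    2 * (2 ^ Fintype.card ι * ∑ ε, g ε ^ 2 - (∑ ε, g ε) ^ 2)
      ≤ ∑ S : Finset ι, (S.card : ℝ) * walshCoeff g S ^ 2 := by
  have hterm : ∀ S ∈ univ.erase ∅, 2 * walshCoeff g S ^ 2 ≤ S.card * walshCoeff g S ^ 2 := by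
    intro S hS
    rcases Nat.even_or_odd S.card with heven | hodd
    · have : 2 ≤ S.card := by
        have := card_ne_zero.mpr (nonempty_iff_ne_empty.mpr (ne_of_mem_erase hS))
        obtain ⟨k, hk⟩ := heven
        omega
      gcongr
      exact_mod_cast this
    · simp [walshCoeff_eq_zero_of_odd hg hodd]
  rw [← sum_sq_walshCoeff, ← walshCoeff_empty, ← add_sum_erase _ _ (mem_univ ∅),
    add_sub_cancel_left, mul_sum]
  calc ∑ S ∈ univ.erase ∅, 2 * walshCoeff g S ^ 2
      ≤ ∑ S ∈ univ.erase ∅, (S.card : ℝ) * walshCoeff g S ^ 2 := sum_le_sum hterm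
    _ ≤ ∑ S, (S.card : ℝ) * walshCoeff g S ^ 2 :=
      sum_le_sum_of_subset_of_nonneg (subset_univ _) fun S _ _ => by positivity

lemma sum_sq_sub_comp_flipAt (g : (ι → Bool) → ℝ) (i : ι) :
    ∑ ε, (g ε - g (flipAt i ε)) ^ 2 = 2 * ∑ ε, (g ε - g (flipAt i ε)) * g ε := by
  have hsq : ∑ ε, g (flipAt i ε) ^ 2 = ∑ ε, g ε ^ 2 := sum_comp_flipAt i fun ε => g ε ^ 2
  have hexpand : ∀ ε, (g ε - g (flipAt i ε)) ^ 2
      = 2 * ((g ε - g (flipAt i ε)) * g ε) + (g (flipAt i ε) ^ 2 - g ε ^ 2) := fun ε => by ring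
  simp_rw [hexpand, sum_add_distrib, sum_sub_distrib, hsq, sub_self, add_zero, mul_sum]

theorem two_pow_mul_sum_sq_le_two_mul_sq_sum {f : (ι → Bool) → ℝ} (hf₀ : ∀ ε, 0 ≤ f ε)
    (hf_even : ∀ ε, f (fun i => !ε i) = f ε)
    (hf_sub : ∀ ε, ((Fintype.card ι : ℝ) - 2) * f ε ≤ ∑ i, f (flipAt i ε)) :
    2 ^ Fintype.card ι * ∑ ε, f ε ^ 2 ≤ 2 * (∑ ε, f ε) ^ 2 := by
  have hlocal : ∀ ε, ∑ i, (f ε - f (flipAt i ε)) * f ε ≤ 2 * f ε ^ 2 := by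
    intro ε
    have : ∑ i, (f ε - f (flipAt i ε)) * f ε
        = ((Fintype.card ι : ℝ) * f ε - ∑ i, f (flipAt i ε)) * f ε := by
      rw [← sum_mul, sum_sub_distrib, sum_const, card_univ, nsmul_eq_mul]
    rw [this]
    nlinarith [hf_sub ε, hf₀ ε]
  have henergy : ∑ i, ∑ ε, (f ε - f (flipAt i ε)) ^ 2 ≤ 4 * ∑ ε, f ε ^ 2 := calc
    ∑ i, ∑ ε, (f ε - f (flipAt i ε)) ^ 2 = 2 * ∑ ε, ∑ i, (f ε - f (flipAt i ε)) * f ε := by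
      simp_rw [sum_sq_sub_comp_flipAt]
      rw [← mul_sum, sum_comm]
    _ ≤ 2 * ∑ ε, 2 * f ε ^ 2 := by gcongr with ε; exact hlocal ε
    _ = 4 * ∑ ε, f ε ^ 2 := by rw [← mul_sum]; ring
  have hspec := two_mul_sub_le_sum_card_mul_sq_walshCoeff hf_even
  have hid := sum_sum_sq_sub_comp_flipAt f
  have := mul_le_mul_of_nonneg_left henergy (by positivity : (0 : ℝ) ≤ 2 ^ Fintype.card ι)
  linarith

lemma sum_flipAt_sum_boolSign_smul {M : Type*} [AddCommGroup M] [Module ℝ M] (a : ι → M)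
    (ε : ι → Bool) :
    ∑ i, ∑ j, boolSign (flipAt i ε j) • a j
      = ((Fintype.card ι : ℝ) - 2) • ∑ j, boolSign (ε j) • a j := by
  have hflip : ∀ i, ∑ j, boolSign (flipAt i ε j) • a j
      = ∑ j, boolSign (ε j) • a j - (2 * boolSign (ε i)) • a i := by
    intro i
    have hterm : ∀ j, boolSign (flipAt i ε j) • a j
        = boolSign (ε j) • a j - if j = i then (2 * boolSign (ε i)) • a i else 0 := by
      intro j
      rw [boolSign_flipAt]
      split_ifs with h
      · subst h; module
      · module
    simp_rw [hterm, sum_sub_distrib, sum_ite_eq', mem_univ, if_true]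
  simp_rw [hflip, mul_smul]
  rw [sum_sub_distrib, sum_const, card_univ, ← smul_sum, sub_smul, Nat.cast_smul_eq_nsmul]

theorem sqrt_sum_norm_sq_div_two_le {E : Type*} [NormedAddCommGroup E] [InnerProductSpace ℝ E]
    (a : ι → E) :
    √((∑ j, ‖a j‖ ^ 2) / 2)
      ≤ (2 ^ Fintype.card ι : ℝ)⁻¹ * ∑ ε : ι → Bool, ‖∑ j, boolSign (ε j) • a j‖ := by
  set f : (ι → Bool) → ℝ := fun ε => ‖∑ j, boolSign (ε j) • a j‖
  have h_even : ∀ ε, f (fun i => !ε i) = f ε := by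
    simp [f, boolSign_not, neg_smul, sum_neg_distrib]
  have h_sub : ∀ ε, ((Fintype.card ι : ℝ) - 2) * f ε ≤ ∑ i, f (flipAt i ε) := fun ε => calc
    ((Fintype.card ι : ℝ) - 2) * f ε
        ≤ ‖((Fintype.card ι : ℝ) - 2) • ∑ j, boolSign (ε j) • a j‖ := by
      rw [norm_smul, Real.norm_eq_abs]
      exact mul_le_mul_of_nonneg_right (le_abs_self _) (norm_nonneg _)
    _ = ‖∑ i, ∑ j, boolSign (flipAt i ε j) • a j‖ := by rw [sum_flipAt_sum_boolSign_smul]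
    _ ≤ ∑ i, f (flipAt i ε) := norm_sum_le _ _
  have hmain :
      2 ^ Fintype.card ι * (2 ^ Fintype.card ι * ∑ j, ‖a j‖ ^ 2) ≤ 2 * (∑ ε, f ε) ^ 2 := by
    rw [← sum_norm_sq_sum_boolSign_smul]
    exact two_pow_mul_sum_sq_le_two_mul_sq_sum (fun ε => norm_nonneg _) h_even h_sub
  rw [Real.sqrt_le_iff]
  refine ⟨by positivity, ?_⟩
  rw [mul_pow, inv_pow, ← div_eq_inv_mul, div_le_div_iff₀ two_pos (by positivity)]
  linarith

end BoolCube

theorem stmt17_general {G : Type*} [AddCommGroup G] [Fintype G] (n : ℕ) (γ : Fin n → AddChar G ℂ) :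
    Real.sqrt (n / 2) ≤ (2 ^ n : ℝ)⁻¹ * ∑ ε : Fin n → Bool,
      (Fintype.card G : ℝ)⁻¹ * ∑ x : G, ‖∑ j, (if ε j then (1 : ℂ) else -1) * γ j x‖ := by
  have hsign : ∀ (b : Bool) (z : ℂ), (if b then (1 : ℂ) else -1) * z = boolSign b • z := by
    intro b z; cases b <;> simp [boolSign]
  have hx : ∀ x : G, √(n / 2) ≤ (2 ^ n : ℝ)⁻¹ * ∑ ε : Fin n → Bool,
      ‖∑ j, (if ε j then (1 : ℂ) else -1) * γ j x‖ := by
    intro x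
    simpa [hsign] using BoolCube.sqrt_sum_norm_sq_div_two_le fun j => γ j x
  have hG : (0 : ℝ) < Fintype.card G := by exact_mod_cast Fintype.card_pos
  calc √(n / 2)
    _ ≤ (Fintype.card G : ℝ)⁻¹ * ∑ x : G, (2 ^ n : ℝ)⁻¹ * ∑ ε : Fin n → Bool,
          ‖∑ j, (if ε j then (1 : ℂ) else -1) * γ j x‖ := by
      rw [le_inv_mul_iff₀ hG]
      simpa using card_nsmul_le_sum univ _ _ fun x _ => hx x
    _ = _ := by
      simp_rw [mul_sum]
      rw [sum_comm]
      simp only [mul_left_comm]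

theorem stmt17 {G : Type*} [AddCommGroup G] [Fintype G]
    (n : ℕ) (hn : 1 ≤ n) (hcard : n ≤ Fintype.card G)
    (γ : Fin n → AddChar G ℂ) (hγ : Function.Injective γ) :
    Real.sqrt (n / 2) ≤ (2 ^ n : ℝ)⁻¹ * ∑ ε : Fin n → Bool,
      (Fintype.card G : ℝ)⁻¹ * ∑ x : G, ‖∑ j, (if ε j then (1 : ℂ) else -1) * γ j x‖ :=
  stmt17_general n γ
end
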